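/- Collisions occur only at zero angular momentum: let T ∈ (0, ∞) and let q, p : [0, T) → ℝ³ be differentiable with q(t) ∉ {o₁, o₂}, q'(t) = p(t), and p'(t) = −∇V(q(t)) for all t ∈ [0, T). If q(t) → o₁ as t → T⁻ (a collision with the first center), then L_z(q(t), p(t)) = 0 for all t ∈ [0, T). The same conclusion holds if instead q(t) → o₂ as t → T⁻. -/

import Mathlib

noncomputable section

open Real Filter Topology
open scoped RealInnerProductSpace

/-- Euclidean 3-space. -/
abbrev R3 : Type := EuclideanSpace ℝ (Fin 3)

/-- The vector `(x, y, z)` in `R3`. -/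
def vec3 (x y z : ℝ) : R3 := (WithLp.equiv 2 (Fin 3 → ℝ)).symm ![x, y, z]

/-- The first center `o₁ = (0,0,-a)`. -/
def ctr1 (a : ℝ) : R3 := vec3 0 0 (-a)

/-- The second center `o₂ = (0,0,a)`. -/
def ctr2 (a : ℝ) : R3 := vec3 0 0 a

/-- The Euler two-center potential `V(q) = -μ₁/r₁(q) - μ₂/r₂(q)`. -/
def eulerV (a μ1 μ2 : ℝ) (q : R3) : ℝ := -μ1 / ‖q - ctr1 a‖ - μ2 / ‖q - ctr2 a‖

/-- The angular momentum `L_z(q,p) = x p_y - y p_x`. -/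
def angMom (q p : R3) : ℝ := q 0 * p 1 - q 1 * p 0

/-- The cross product `q × p` in `R3`. -/
def cross3 (q p : R3) : R3 :=
  vec3 (q 1 * p 2 - q 2 * p 1) (q 2 * p 0 - q 0 * p 2) (q 0 * p 1 - q 1 * p 0)

/-- The Euler Hamiltonian `H(q,p) = ‖p‖²/2 + V(q)`. -/
def eulerH (a μ1 μ2 : ℝ) (q p : R3) : ℝ := ‖p‖ ^ 2 / 2 + eulerV a μ1 μ2 q

/-- The separation constant
`G(q,p) = H + (‖q×p‖² - a²(pₓ²+p_y²))/2 + a(z+a)μ₁/r₁ - a(z-a)μ₂/r₂`. -/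
def eulerG (a μ1 μ2 : ℝ) (q p : R3) : ℝ :=
  eulerH a μ1 μ2 q p + (‖cross3 q p‖ ^ 2 - a ^ 2 * ((p 0) ^ 2 + (p 1) ^ 2)) / 2
    + a * (q 2 + a) * μ1 / ‖q - ctr1 a‖ - a * (q 2 - a) * μ2 / ‖q - ctr2 a‖

/-!
Since `∇V(q)` is the sum of multiples of `q - o₁` and `q - o₂`, both centres lying on the
`z`-axis, its horizontal part is parallel to `(x, y)`; hence `L_z` is conserved, and so is `H`.
If `q → c` for a point `c` of the axis, then `L_z² ≤ ‖q - c‖² ‖p‖² = ‖q - c‖² (2H - 2V(q))`,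
and `‖q - c‖² V(q) → 0` because `V` has at most a `1/‖q - c‖` singularity at `c`.
So the constant `L_z²` is bounded by a quantity tending to `0`.
-/

lemma Convex.eq_of_hasDerivWithinAt_eq_zero {E : Type*} [NormedAddCommGroup E] [NormedSpace ℝ E]
    {f : ℝ → E} {s : Set ℝ} (hs : Convex ℝ s) (hf : ∀ t ∈ s, HasDerivWithinAt f 0 s t)
    {x y : ℝ} (hx : x ∈ s) (hy : y ∈ s) : f x = f y := by
  simpa only [zero_mul, norm_le_zero_iff, sub_eq_zero, eq_comm] using
    hs.norm_image_sub_le_of_norm_hasDerivWithin_le hf (fun _ _ => norm_zero.le) hx hy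

lemma tendsto_norm_sub_sq_mul_div_norm_sub {E : Type*} [NormedAddCommGroup E] (μ : ℝ)
    (c c' : E) : Tendsto (fun x => ‖x - c‖ ^ 2 * (μ / ‖x - c'‖)) (𝓝 c) (𝓝 0) := by
  have hr : Tendsto (fun x => ‖x - c‖) (𝓝 c) (𝓝 0) := tendsto_iff_norm_sub_tendsto_zero.1 tendsto_id
  by_cases hcc : c' = c
  · subst hcc
    have h (x : E) : ‖x - c'‖ ^ 2 * (μ / ‖x - c'‖) = μ * ‖x - c'‖ := by
      rcases eq_or_ne ‖x - c'‖ 0 with h0 | h0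
      · simp [h0]
      · field_simp
    simpa only [h, mul_zero] using hr.const_mul μ
  · have hcc' : ‖c - c'‖ ≠ 0 := norm_ne_zero_iff.2 (sub_ne_zero.2 (Ne.symm hcc))
    simpa using (hr.pow 2).mul (tendsto_const_nhds.div (tendsto_id.sub_const c').norm hcc')

section Gradient

variable {E : Type*} [NormedAddCommGroup E] [InnerProductSpace ℝ E] [CompleteSpace E]

lemma HasGradientAt.add {f g : E → ℝ} {f' g' x : E} (hf : HasGradientAt f f' x)
    (hg : HasGradientAt g g' x) : HasGradientAt (fun y => f y + g y) (f' + g') x := by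
  rw [hasGradientAt_iff_hasFDerivAt] at hf hg ⊢
  rw [map_add]
  exact hf.add hg

lemma hasGradientAt_neg_div_norm_sub (μ : ℝ) {c x : E} (hx : x ≠ c) :
    HasGradientAt (fun y => -μ / ‖y - c‖) ((μ / ‖x - c‖ ^ 3) • (x - c)) x := by
  have hr : 0 < ‖x - c‖ := norm_pos_iff.2 (sub_ne_zero.2 hx)
  have hsqrt : HasDerivAt (fun s => -μ * (√s)⁻¹) (μ / (2 * ‖x - c‖ ^ 3)) (‖x - c‖ ^ 2) := by
    refine (((hasDerivAt_sqrt (by positivity)).inv (by positivity)).const_mul (-μ)).congr_deriv ?_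
    rw [sqrt_sq hr.le]; field_simp
  have hsq : HasFDerivAt (fun y => ‖y - c‖ ^ 2) (2 • innerSL ℝ (x - c)) x := by
    simpa using ((hasFDerivAt_id x).sub_const c).norm_sq
  have hfun : (fun y : E => -μ / ‖y - c‖) = fun y => -μ * (√(‖y - c‖ ^ 2))⁻¹ := by
    funext y; rw [sqrt_sq (norm_nonneg _), div_eq_mul_inv]
  rw [hasGradientAt_iff_hasFDerivAt, hfun]
  refine (hsqrt.comp_hasFDerivAt x hsq).congr_fderiv ?_
  ext v
  simp only [smul_apply, coe_innerSL_apply, nsmul_eq_mul, Nat.cast_ofNat,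
    smul_eq_mul, map_smul, InnerProductSpace.toDual_apply_apply]
  field_simp

lemma hasDerivWithinAt_energy_eq_zero {V : E → ℝ} {q p : ℝ → E} {g : E} {s : Set ℝ} {t : ℝ}
    (hV : HasGradientAt V g (q t)) (hq : HasDerivWithinAt q (p t) s t)
    (hp : HasDerivWithinAt p (-g) s t) :
    HasDerivWithinAt (fun τ => ‖p τ‖ ^ 2 / 2 + V (q τ)) 0 s t := by
  have hVq : HasDerivWithinAt (fun τ => V (q τ)) ⟪g, p t⟫ s t :=
    hV.hasFDerivAt.comp_hasDerivWithinAt t hq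
  refine (hp.norm_sq.div_const 2 |>.add hVq).congr_deriv ?_
  rw [inner_neg_right, real_inner_comm]
  ring

end Gradient

lemma angMom_self (p : R3) : angMom p p = 0 := by
  unfold angMom; ring

lemma angMom_neg_right (q p : R3) : angMom q (-p) = -angMom q p := by
  simp only [angMom, PiLp.neg_apply]; ring

lemma angMom_sub_left_of_axis {c : R3} (hc0 : c 0 = 0) (hc1 : c 1 = 0) (q p : R3) :
    angMom (q - c) p = angMom q p := by
  simp only [angMom, PiLp.sub_apply, hc0, hc1, sub_zero]

lemma angMom_sq_le (q p : R3) : angMom q p ^ 2 ≤ ‖q‖ ^ 2 * ‖p‖ ^ 2 := by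
  simp only [EuclideanSpace.real_norm_sq_eq, Fin.sum_univ_three, angMom]
  nlinarith [sq_nonneg (q 0 * p 0 + q 1 * p 1 + q 2 * p 2), sq_nonneg (q 1 * p 2 - q 2 * p 1),
    sq_nonneg (q 2 * p 0 - q 0 * p 2)]

lemma HasDerivWithinAt.angMom {q p : ℝ → R3} {q' p' : R3} {s : Set ℝ} {t : ℝ}
    (hq : HasDerivWithinAt q q' s t) (hp : HasDerivWithinAt p p' s t) :
    HasDerivWithinAt (fun τ => angMom (q τ) (p τ)) (angMom q' (p t) + angMom (q t) p') s t := by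
  have coord : ∀ {f : ℝ → R3} {f' : R3} (i : Fin 3), HasDerivWithinAt f f' s t →
      HasDerivWithinAt (fun τ => f τ i) (f' i) s t := fun i hf =>
    (EuclideanSpace.proj (𝕜 := ℝ) i).hasFDerivAt.comp_hasDerivWithinAt t hf
  refine (((coord 0 hq).mul (coord 1 hp)).sub ((coord 1 hq).mul (coord 0 hp))).congr_deriv ?_
  unfold _root_.angMom; ring

lemma hasDerivWithinAt_angMom_eq_zero {q p : ℝ → R3} {g : R3} {s : Set ℝ} {t : ℝ}
    (hg : angMom (q t) g = 0) (hq : HasDerivWithinAt q (p t) s t)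
    (hp : HasDerivWithinAt p (-g) s t) :
    HasDerivWithinAt (fun τ => angMom (q τ) (p τ)) 0 s t :=
  (hq.angMom hp).congr_deriv (by rw [angMom_self, angMom_neg_right, hg]; simp)

section EulerProblem

variable {a μ1 μ2 : ℝ}

lemma hasGradientAt_eulerV {x : R3} (h1 : x ≠ ctr1 a) (h2 : x ≠ ctr2 a) :
    HasGradientAt (eulerV a μ1 μ2)
      ((μ1 / ‖x - ctr1 a‖ ^ 3) • (x - ctr1 a) + (μ2 / ‖x - ctr2 a‖ ^ 3) • (x - ctr2 a)) x := by
  have hV : eulerV a μ1 μ2 = fun y => -μ1 / ‖y - ctr1 a‖ + -μ2 / ‖y - ctr2 a‖ := by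
    funext y; rw [eulerV]; ring
  rw [hV]
  exact (hasGradientAt_neg_div_norm_sub μ1 h1).add (hasGradientAt_neg_div_norm_sub μ2 h2)

lemma angMom_gradient_eulerV {x : R3} (h1 : x ≠ ctr1 a) (h2 : x ≠ ctr2 a) :
    angMom x (gradient (eulerV a μ1 μ2) x) = 0 := by
  rw [(hasGradientAt_eulerV h1 h2).gradient]
  simp only [angMom, ctr1, ctr2, vec3, WithLp.equiv_symm_apply, PiLp.add_apply, PiLp.smul_apply,
    PiLp.sub_apply, Matrix.cons_val_one, Matrix.cons_val_zero, sub_zero, smul_eq_mul]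
  ring

lemma tendsto_norm_sub_sq_mul_eulerV (c : R3) :
    Tendsto (fun x => ‖x - c‖ ^ 2 * eulerV a μ1 μ2 x) (𝓝 c) (𝓝 0) := by
  have h := (tendsto_norm_sub_sq_mul_div_norm_sub μ1 c (ctr1 a)).neg.sub
    (tendsto_norm_sub_sq_mul_div_norm_sub μ2 c (ctr2 a))
  rw [neg_zero, sub_zero] at h
  refine h.congr fun x => ?_
  rw [eulerV, neg_div]
  ring

lemma angMom_eq_zero_of_tendsto_axis {ι : Type*} {l : Filter ι} [l.NeBot] {q p : ι → R3}
    {c : R3} (hc0 : c 0 = 0) (hc1 : c 1 = 0) {L E : ℝ} (hqc : Tendsto q l (𝓝 c))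
    (hL : ∀ᶠ t in l, angMom (q t) (p t) = L) (hE : ∀ᶠ t in l, eulerH a μ1 μ2 (q t) (p t) = E) :
    L = 0 := by
  have hbound : ∀ᶠ t in l,
      L ^ 2 ≤ 2 * E * ‖q t - c‖ ^ 2 - 2 * (‖q t - c‖ ^ 2 * eulerV a μ1 μ2 (q t)) := by
    filter_upwards [hL, hE] with t hLt hEt
    calc L ^ 2 = angMom (q t - c) (p t) ^ 2 := by rw [angMom_sub_left_of_axis hc0 hc1, hLt]
      _ ≤ ‖q t - c‖ ^ 2 * ‖p t‖ ^ 2 := angMom_sq_le _ _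
      _ = _ := by rw [← hEt, eulerH]; ring
  have hlim : Tendsto (fun t => 2 * E * ‖q t - c‖ ^ 2 - 2 * (‖q t - c‖ ^ 2 * eulerV a μ1 μ2 (q t)))
      l (𝓝 0) := by
    have hr : Tendsto (fun t => ‖q t - c‖) l (𝓝 0) := tendsto_iff_norm_sub_tendsto_zero.1 hqc
    simpa using ((hr.pow 2).const_mul (2 * E)).sub
      (((tendsto_norm_sub_sq_mul_eulerV c).comp hqc).const_mul 2)
  exact pow_eq_zero_iff two_ne_zero |>.1 <| le_antisymm (ge_of_tendsto hlim hbound) (sq_nonneg L)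

end EulerProblem

theorem statement19_general (a μ1 μ2 : ℝ) (T : ℝ) (q p : ℝ → R3)
    (hcent : ∀ t ∈ Set.Ico 0 T, q t ≠ ctr1 a ∧ q t ≠ ctr2 a)
    (hq : ∀ t ∈ Set.Ico 0 T, HasDerivWithinAt q (p t) (Set.Ico 0 T) t)
    (hp : ∀ t ∈ Set.Ico 0 T,
      HasDerivWithinAt p (-gradient (eulerV a μ1 μ2) (q t)) (Set.Ico 0 T) t)
    (hcol : Tendsto q (𝓝[<] T) (𝓝 (ctr1 a)) ∨ Tendsto q (𝓝[<] T) (𝓝 (ctr2 a))) :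
    ∀ t ∈ Set.Ico 0 T, angMom (q t) (p t) = 0 := by
  intro t₀ ht₀
  have hL : ∀ t ∈ Set.Ico 0 T, angMom (q t) (p t) = angMom (q t₀) (p t₀) := fun t ht =>
    (convex_Ico 0 T).eq_of_hasDerivWithinAt_eq_zero (fun τ hτ => hasDerivWithinAt_angMom_eq_zero
      (angMom_gradient_eulerV (hcent τ hτ).1 (hcent τ hτ).2) (hq τ hτ) (hp τ hτ)) ht ht₀
  have hgrad : ∀ t ∈ Set.Ico 0 T,
      HasGradientAt (eulerV a μ1 μ2) (gradient (eulerV a μ1 μ2) (q t)) (q t) := fun t ht =>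
    (hasGradientAt_eulerV (hcent t ht).1 (hcent t ht).2).differentiableAt.hasGradientAt
  have hE : ∀ t ∈ Set.Ico 0 T, eulerH a μ1 μ2 (q t) (p t) = eulerH a μ1 μ2 (q t₀) (p t₀) :=
    fun t ht => (convex_Ico 0 T).eq_of_hasDerivWithinAt_eq_zero (fun τ hτ =>
      hasDerivWithinAt_energy_eq_zero (hgrad τ hτ) (hq τ hτ) (hp τ hτ)) ht ht₀
  have hnear : ∀ᶠ t in 𝓝[<] T, t ∈ Set.Ico 0 T :=
    mem_of_superset (Ioo_mem_nhdsLT ht₀.2) fun t ht => ⟨ht₀.1.trans ht.1.le, ht.2⟩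
  obtain ⟨c, hc0, hc1, hqc⟩ : ∃ c : R3, c 0 = 0 ∧ c 1 = 0 ∧ Tendsto q (𝓝[<] T) (𝓝 c) := by
    rcases hcol with h | h
    exacts [⟨ctr1 a, by simp [ctr1, vec3], by simp [ctr1, vec3], h⟩,
      ⟨ctr2 a, by simp [ctr2, vec3], by simp [ctr2, vec3], h⟩]
  exact angMom_eq_zero_of_tendsto_axis hc0 hc1 hqc (hnear.mono hL) (hnear.mono hE)

/-- Collisions occur only at zero angular momentum: if a solution of the
Euler problem on `[0,T)` converges to one of the centers as `t → T⁻`, then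
`L_z(q(t),p(t)) = 0` for all `t ∈ [0,T)`. -/
theorem statement19 (a μ1 μ2 : ℝ) (ha : 0 < a) (T : ℝ) (hT : 0 < T) (q p : ℝ → R3)
    (hcent : ∀ t ∈ Set.Ico 0 T, q t ≠ ctr1 a ∧ q t ≠ ctr2 a)
    (hq : ∀ t ∈ Set.Ico 0 T, HasDerivWithinAt q (p t) (Set.Ico 0 T) t)
    (hp : ∀ t ∈ Set.Ico 0 T,
      HasDerivWithinAt p (-gradient (eulerV a μ1 μ2) (q t)) (Set.Ico 0 T) t)
    (hcol : Tendsto q (𝓝[<] T) (𝓝 (ctr1 a)) ∨ Tendsto q (𝓝[<] T) (𝓝 (ctr2 a))) :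
    ∀ t ∈ Set.Ico 0 T, angMom (q t) (p t) = 0 :=
  statement19_general a μ1 μ2 T q p hcent hq hp hcol
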